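/- arXiv:1912.00459 — 3 statements merged into one kernel-verified Lean document; each statement's English description precedes it below -/
import Mathlib

section
/- Correctness of the Partition reduction for zero sharings (forward direction): if the Partition instance a_1,…,a_p with sum 2T has an equal-sum split, then the constructed n-agent instance admits an envy-free (hence proportional) allocation with zero sharings. -/
/-!
Split the number goods along an equal-sum partition, choosing the half whose `b`-weight is at
least `1/4` for Bob and the other half for Alice, and give every personal agent its own personal
good. Alice values each of the `n` bundles at exactly `T`. Bob gains at least `1/4` over `T` on
his half, at most `1/4` on Alice's, and loses on the personal goods. A personal agent values
its own good at `nT - 1/2 ≥ 1/2`, while everything else together is worth only `1/2` to it.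
-/

open Finset

/-- `z` is a feasible fractional allocation (agents `A`, goods `G`). -/
def isAlloc {A G : Type*} [Fintype A] [Fintype G] (z : A → G → ℝ) : Prop :=
  (∀ i o, 0 ≤ z i o) ∧ ∀ o, ∑ i, z i o = 1

/-- Agent `i`'s additive value for agent `j`'s bundle in allocation `z`. -/
noncomputable def ubundle {A G : Type*} [Fintype G] (v z : A → G → ℝ) (i j : A) : ℝ :=
  ∑ o, v i o * z j o

section AssignAlloc

variable {A G : Type*} [DecidableEq A]

def assignAlloc (σ : G → A) : A → G → ℝ :=
  fun i g => if σ g = i then 1 else 0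

theorem assignAlloc_eq_zero_or_one (σ : G → A) (i : A) (g : G) :
    assignAlloc σ i g = 0 ∨ assignAlloc σ i g = 1 := by
  unfold assignAlloc; split_ifs <;> simp

variable [Fintype G]

theorem isAlloc_assignAlloc [Fintype A] (σ : G → A) : isAlloc (assignAlloc σ) :=
  ⟨fun i g => by unfold assignAlloc; split_ifs <;> norm_num,
    fun g => by simp [assignAlloc]⟩

theorem ubundle_assignAlloc (v : A → G → ℝ) (σ : G → A) (i j : A) :
    ubundle v (assignAlloc σ) i j = ∑ g with σ g = j, v i g := by
  simp [ubundle, assignAlloc, sum_filter]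

theorem ubundle_assignAlloc_le_sum_erase [DecidableEq G] {v : A → G → ℝ} {σ : G → A} {g₀ : G}
    {i j : A} (hσ : σ g₀ = i) (hj : j ≠ i) (hv : ∀ g ≠ g₀, 0 ≤ v i g) :
    ubundle v (assignAlloc σ) i j ≤ ∑ g ∈ univ.erase g₀, v i g := by
  rw [ubundle_assignAlloc]
  refine sum_le_sum_of_subset_of_nonneg (fun g hg => ?_) fun g hg _ => hv g (ne_of_mem_erase hg)
  refine mem_erase.mpr ⟨?_, mem_univ g⟩
  rintro rfl
  exact hj ((mem_filter.mp hg).2.symm.trans hσ)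

end AssignAlloc

theorem exists_sum_eq_sum_compl_and_sum_compl_le_sum {ι M : Type*} [Fintype ι] [DecidableEq ι]
    [AddCommMonoid M] {a : ι → M} {X : Finset ι} (hX : ∑ i ∈ X, a i = ∑ i ∈ Xᶜ, a i)
    (b : ι → ℝ) :
    ∃ Y : Finset ι, ∑ i ∈ Y, a i = ∑ i ∈ Yᶜ, a i ∧ ∑ i ∈ Yᶜ, b i ≤ ∑ i ∈ Y, b i := by
  by_cases hXb : ∑ i ∈ Xᶜ, b i ≤ ∑ i ∈ X, b i
  · exact ⟨X, hX, hXb⟩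
  · refine ⟨Xᶜ, by rw [compl_compl, hX], ?_⟩
    rw [compl_compl]
    exact (not_le.mp hXb).le

section PartitionAssign

variable {P K : Type*} [Fintype P] [Fintype K] [DecidableEq P] [DecidableEq K]

def partitionAssign (Y : Finset P) : P ⊕ K → Fin 2 ⊕ K :=
  Sum.elim (fun o => Sum.inl (if o ∈ Y then 1 else 0)) Sum.inr

variable (v : Fin 2 ⊕ K → P ⊕ K → ℝ) (Y : Finset P) (i : Fin 2 ⊕ K)

theorem ubundle_partitionAssign_inl_one :
    ubundle v (assignAlloc (partitionAssign Y)) i (Sum.inl 1) = ∑ o ∈ Y, v i (Sum.inl o) := by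
  rw [ubundle_assignAlloc, sum_filter, Fintype.sum_sum_type]
  simp [partitionAssign]

theorem ubundle_partitionAssign_inl_zero :
    ubundle v (assignAlloc (partitionAssign Y)) i (Sum.inl 0) = ∑ o ∈ Yᶜ, v i (Sum.inl o) := by
  rw [ubundle_assignAlloc, sum_filter, Fintype.sum_sum_type]
  simp [partitionAssign, sum_ite, filter_not, compl_eq_univ_sdiff]

theorem ubundle_partitionAssign_inr (k : K) :
    ubundle v (assignAlloc (partitionAssign Y)) i (Sum.inr k) = v i (Sum.inr k) := by
  rw [ubundle_assignAlloc, sum_filter, Fintype.sum_sum_type]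
  simp [partitionAssign]

theorem ubundle_partitionAssign_le {s : ℝ} (hzero : ∑ o ∈ Yᶜ, v i (Sum.inl o) ≤ s)
    (hone : ∑ o ∈ Y, v i (Sum.inl o) ≤ s) (hinr : ∀ k, v i (Sum.inr k) ≤ s) (j : Fin 2 ⊕ K) :
    ubundle v (assignAlloc (partitionAssign Y)) i j ≤ s := by
  rcases j with j | k
  · fin_cases j
    · simpa [ubundle_partitionAssign_inl_zero] using hzero
    · simpa [ubundle_partitionAssign_inl_one] using hone
  · simpa [ubundle_partitionAssign_inr] using hinr k

theorem ubundle_partitionAssign_inr_le {k : K} (hv : ∀ g ≠ Sum.inr k, 0 ≤ v (Sum.inr k) g)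
    (hown : ∑ g ∈ univ.erase (Sum.inr k), v (Sum.inr k) g ≤ v (Sum.inr k) (Sum.inr k))
    (j : Fin 2 ⊕ K) :
    ubundle v (assignAlloc (partitionAssign Y)) (Sum.inr k) j
      ≤ ubundle v (assignAlloc (partitionAssign Y)) (Sum.inr k) (Sum.inr k) := by
  rw [ubundle_partitionAssign_inr]
  rcases eq_or_ne j (Sum.inr k) with rfl | hj
  · rw [ubundle_partitionAssign_inr]
  · exact (ubundle_assignAlloc_le_sum_erase (g₀ := Sum.inr k) rfl hj hv).trans hown

end PartitionAssign

/-- Alice is agent `inl 0`, Bob `inl 1` and the personal agents `inr k`; the number goods are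
`inl o` and the personal goods `inr k`. -/
theorem partition_reduction_forward_general (n p : ℕ) (hn : 2 ≤ n) (hp : 0 < p) (T : ℕ)
    (a : Fin p → ℕ) (ha : ∀ o, 0 < a o) (hasum : ∑ o, a o = 2 * T)
    (b : Fin p → ℝ) (hbsum : ∑ o, b o = 1/2)
    (c : Fin (n - 2) → ℝ) (hc : ∀ k, 0 < c k)
    (e : Fin (n - 2) → (Fin p ⊕ Fin (n - 2)) → ℝ) (he : ∀ k g, 0 < e k g)
    (hesum : ∀ k, ∑ g ∈ univ.erase (Sum.inr k), e k g = 1/2)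
    (v : (Fin 2 ⊕ Fin (n - 2)) → (Fin p ⊕ Fin (n - 2)) → ℝ)
    (hvA : ∀ o, v (Sum.inl 0) (Sum.inl o) = a o)
    (hvA' : ∀ k, v (Sum.inl 0) (Sum.inr k) = T)
    (hvB : ∀ o, v (Sum.inl 1) (Sum.inl o) = a o + b o)
    (hvB' : ∀ k, v (Sum.inl 1) (Sum.inr k) = T - c k)
    (hvP : ∀ k g, v (Sum.inr k) g = if g = Sum.inr k then (n : ℝ) * T - 1/2 else e k g)
    (hpart : ∃ X : Finset (Fin p), ∑ o ∈ X, a o = T) :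
    ∃ z : (Fin 2 ⊕ Fin (n - 2)) → (Fin p ⊕ Fin (n - 2)) → ℝ,
      isAlloc z ∧ (∀ i g, z i g = 0 ∨ z i g = 1) ∧
      ∀ i j, ubundle v z i j ≤ ubundle v z i i := by
  classical
  obtain ⟨X, hX⟩ := hpart
  have hXsplit := sum_add_sum_compl X a
  obtain ⟨Y, hYa, hYb⟩ :=
    exists_sum_eq_sum_compl_and_sum_compl_le_sum (a := a) (X := X) (by omega) b
  have hYsplit := sum_add_sum_compl Y a
  have hYT : ∑ o ∈ Y, (a o : ℝ) = T := by exact_mod_cast (by omega : ∑ o ∈ Y, a o = T)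
  have hYcT : ∑ o ∈ Yᶜ, (a o : ℝ) = T := by exact_mod_cast (by omega : ∑ o ∈ Yᶜ, a o = T)
  have hbY : 1/4 ≤ ∑ o ∈ Y, b o := by linarith [sum_add_sum_compl Y b]
  have hnT : (1 : ℝ) ≤ n * T := by
    have : 0 < ∑ o, a o := sum_pos (fun o _ => ha o) ⟨⟨0, hp⟩, mem_univ _⟩
    exact_mod_cast (by nlinarith : 1 ≤ n * T)
  refine ⟨assignAlloc (partitionAssign Y), isAlloc_assignAlloc _, assignAlloc_eq_zero_or_one _,
    Sum.forall.2 ⟨Fin.forall_fin_two.2 ⟨fun j => ?_, fun j => ?_⟩, fun k j => ?_⟩⟩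
  · rw [ubundle_partitionAssign_inl_zero]
    refine ubundle_partitionAssign_le v Y _ ?_ ?_ (fun k => ?_) j <;>
      simp only [hvA, hvA', hYT, hYcT, le_refl]
  · rw [ubundle_partitionAssign_inl_one]
    refine ubundle_partitionAssign_le v Y _ ?_ le_rfl (fun k => ?_) j <;>
      simp only [hvB, hvB', sum_add_distrib, hYT, hYcT]
    · linarith
    · linarith [hc k]
  · have hrest : ∑ g ∈ univ.erase (Sum.inr k), v (Sum.inr k) g = 1/2 := by
      rw [← hesum k]
      exact sum_congr rfl fun g hg => by rw [hvP, if_neg (ne_of_mem_erase hg)]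
    refine ubundle_partitionAssign_inr_le v Y (fun g hg => ?_) ?_ j
    · rw [hvP, if_neg hg]
      exact (he k g).le
    · rw [hrest, hvP, if_pos rfl]
      linarith

/-- Forward direction of the Partition reduction for zero sharings: if the Partition
instance `a₁,…,a_p` (sum `2T`) has an equal-sum split, then the constructed `n`-agent
instance (Alice = `inl 0`, Bob = `inl 1`, personal agents = `inr k`; number goods
`inl o`, personal goods `inr k`) admits an envy-free integral (zero-sharing) allocation. -/
theorem partition_reduction_forward (n p : ℕ) (hn : 2 ≤ n) (hp : 0 < p) (T : ℕ)
    (a : Fin p → ℕ) (ha : ∀ o, 0 < a o) (hasum : ∑ o, a o = 2 * T)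
    (b : Fin p → ℝ) (hb : ∀ o, 0 < b o) (hbsum : ∑ o, b o = 1/2)
    (c : Fin (n - 2) → ℝ) (hc : ∀ k, 0 < c k) (hcsum : ∑ k, c k = 1/2)
    (e : Fin (n - 2) → (Fin p ⊕ Fin (n - 2)) → ℝ) (he : ∀ k g, 0 < e k g)
    (hesum : ∀ k, ∑ g ∈ univ.erase (Sum.inr k), e k g = 1/2)
    (v : (Fin 2 ⊕ Fin (n - 2)) → (Fin p ⊕ Fin (n - 2)) → ℝ)
    (hvA : ∀ o, v (Sum.inl 0) (Sum.inl o) = a o)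
    (hvA' : ∀ k, v (Sum.inl 0) (Sum.inr k) = T)
    (hvB : ∀ o, v (Sum.inl 1) (Sum.inl o) = a o + b o)
    (hvB' : ∀ k, v (Sum.inl 1) (Sum.inr k) = T - c k)
    (hvP : ∀ k g, v (Sum.inr k) g = if g = Sum.inr k then (n : ℝ) * T - 1/2 else e k g)
    (hpart : ∃ X : Finset (Fin p), ∑ o ∈ X, a o = T) :
    ∃ z : (Fin 2 ⊕ Fin (n - 2)) → (Fin p ⊕ Fin (n - 2)) → ℝ,
      isAlloc z ∧ (∀ i g, z i g = 0 ∨ z i g = 1) ∧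
      ∀ i j, ubundle v z i j ≤ ubundle v z i i :=
  partition_reduction_forward_general n p hn hp T a ha hasum b hbsum c hc e he hesum v hvA hvA' hvB
    hvB' hvP hpart
end

section
/- Correctness of the Partition reduction for zero sharings (backward direction): if the constructed n-agent instance admits a proportional allocation with zero sharings, then the Partition instance a_1,…,a_p has an equal-sum split. -/
open Finset

/-!
Every agent values the whole set of goods at `n T`, so proportionality asks for a bundle worth
`T`. A personal agent values everything but its personal good at `1/2` in total, so for `T ≥ 1`
it must receive that good; Alice and Bob therefore split the number goods into disjoint sets
`X` and `Y`. Alice needs `a(X) ≥ T`; Bob needs `a(Y) + b(Y) ≥ T` with `b(Y) ≤ 1/2`, so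
`a(Y) ≥ T` by integrality. As `a(X) + a(Y) ≤ 2 T`, we get `a(X) = T`.
-/

section IntegralAllocation

variable {A G : Type*} [Fintype G] [DecidableEq A]

theorem isAlloc.exists_owner [Fintype A] {z : A → G → ℝ} (hz : isAlloc z)
    (hint : ∀ i g, z i g = 0 ∨ z i g = 1) :
    ∃ σ : G → A, z = fun i g => if σ g = i then 1 else 0 := by
  have hex : ∀ g, ∃ i, z i g = 1 := fun g => by
    obtain ⟨i, -, hi⟩ := exists_ne_zero_of_sum_ne_zero (s := univ) (f := (z · g))
      (by rw [hz.2 g]; exact one_ne_zero)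
    exact ⟨i, (hint i g).resolve_left hi⟩
  choose σ hσ using hex
  refine ⟨σ, funext₂ fun i g => ?_⟩
  split_ifs with h
  · exact h ▸ hσ g
  · have hpair := sum_le_sum_of_subset_of_nonneg (subset_univ {i, σ g})
      fun j _ _ => hz.1 j g
    rw [sum_pair (Ne.symm h), hz.2, hσ] at hpair
    exact le_antisymm (by linarith) (hz.1 i g)

theorem ubundle_owner (v : A → G → ℝ) (σ : G → A) (i : A) :
    ubundle v (fun i g => if σ g = i then 1 else 0) i i = ∑ g ∈ univ.filter (σ · = i), v i g := by
  simp only [ubundle, mul_ite, mul_one, mul_zero, sum_filter]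

end IntegralAllocation

theorem sum_filter_sum_type_of_not_inr {α β M : Type*} [Fintype α] [Fintype β]
    [AddCommMonoid M] (p : α ⊕ β → Prop) [DecidablePred p] (f : α ⊕ β → M)
    (hp : ∀ y, ¬ p (Sum.inr y)) :
    ∑ g ∈ univ.filter p, f g = ∑ x ∈ univ.filter (fun x => p (Sum.inl x)), f (Sum.inl x) := by
  simp only [sum_filter, Fintype.sum_sum_type, hp, if_false, sum_const_zero, add_zero]

section PersonalValuation

variable {G : Type*} [Fintype G] [DecidableEq G] {w e : G → ℝ} {g₀ : G} {x : ℝ}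

theorem sum_eq_of_eq_ite (hw : ∀ g, w g = if g = g₀ then x else e g) :
    ∑ g, w g = x + ∑ g ∈ univ.erase g₀, e g := by
  rw [← add_sum_erase _ _ (mem_univ g₀), hw, if_pos rfl]
  congr 1
  exact sum_congr rfl fun g hg => by rw [hw, if_neg (ne_of_mem_erase hg)]

theorem sum_le_of_eq_ite_of_not_mem (hw : ∀ g, w g = if g = g₀ then x else e g)
    (he : ∀ g, 0 ≤ e g) {S : Finset G} (hS : g₀ ∉ S) :
    ∑ g ∈ S, w g ≤ ∑ g ∈ univ.erase g₀, e g := by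
  have hSe : S ⊆ univ.erase g₀ := fun g hg => mem_erase.2 ⟨ne_of_mem_of_not_mem hg hS, mem_univ g⟩
  calc ∑ g ∈ S, w g = ∑ g ∈ S, e g :=
        sum_congr rfl fun g hg => by rw [hw, if_neg (ne_of_mem_of_not_mem hg hS)]
    _ ≤ _ := sum_le_sum_of_subset_of_nonneg hSe fun g _ _ => he g

end PersonalValuation

theorem sum_number_personal_eq {p m T : ℕ} (a : Fin p → ℕ) (hasum : ∑ o, a o = 2 * T)
    (b : Fin p → ℝ) (c : Fin m → ℝ) (hbc : ∑ o, b o = ∑ k, c k) (w : Fin p ⊕ Fin m → ℝ)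
    (hw : ∀ o, w (Sum.inl o) = a o + b o) (hw' : ∀ k, w (Sum.inr k) = T - c k) :
    ∑ g, w g = (m + 2) * T := by
  have ha : ∑ o, (a o : ℝ) = 2 * T := by exact_mod_cast hasum
  simp only [Fintype.sum_sum_type, hw, hw', sum_add_distrib, sum_sub_distrib, ha, hbc,
    sum_const, card_univ, Fintype.card_fin, nsmul_eq_mul]
  ring

theorem sum_eq_of_disjoint_of_le {ι : Type*} [Fintype ι] [DecidableEq ι] (a : ι → ℕ) {T : ℕ}
    (hasum : ∑ i, a i = 2 * T) {X Y : Finset ι} (hXY : Disjoint X Y)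
    (hX : T ≤ ∑ i ∈ X, a i) (hY : T ≤ ∑ i ∈ Y, a i) : ∑ i ∈ X, a i = T := by
  have : ∑ i ∈ X, a i + ∑ i ∈ Y, a i ≤ 2 * T := by
    rw [← sum_union hXY, ← hasum]
    exact sum_le_sum_of_subset (subset_univ _)
  omega

theorem Nat.le_of_cast_le_add_of_lt_one {m k : ℕ} {β : ℝ} (h : (m : ℝ) ≤ k + β) (hβ : β < 1) :
    m ≤ k := by
  have : (m : ℝ) < k + 1 := by linarith
  exact_mod_cast Nat.lt_succ_iff.1 (by exact_mod_cast this)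

theorem partition_reduction_backward_general (n p : ℕ) (hn : 2 ≤ n) (T : ℕ)
    (a : Fin p → ℕ) (hasum : ∑ o, a o = 2 * T)
    (b : Fin p → ℝ) (hb : ∀ o, 0 < b o) (hbsum : ∑ o, b o = 1/2)
    (c : Fin (n - 2) → ℝ) (hcsum : ∑ k, c k = 1/2)
    (e : Fin (n - 2) → (Fin p ⊕ Fin (n - 2)) → ℝ) (he : ∀ k g, 0 < e k g)
    (hesum : ∀ k, ∑ g ∈ univ.erase (Sum.inr k), e k g = 1/2)
    (v : (Fin 2 ⊕ Fin (n - 2)) → (Fin p ⊕ Fin (n - 2)) → ℝ)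
    (hvA : ∀ o, v (Sum.inl 0) (Sum.inl o) = a o)
    (hvA' : ∀ k, v (Sum.inl 0) (Sum.inr k) = T)
    (hvB : ∀ o, v (Sum.inl 1) (Sum.inl o) = a o + b o)
    (hvB' : ∀ k, v (Sum.inl 1) (Sum.inr k) = T - c k)
    (hvP : ∀ k g, v (Sum.inr k) g = if g = Sum.inr k then (n : ℝ) * T - 1/2 else e k g)
    (hprop : ∃ z : (Fin 2 ⊕ Fin (n - 2)) → (Fin p ⊕ Fin (n - 2)) → ℝ,
      isAlloc z ∧ (∀ i g, z i g = 0 ∨ z i g = 1) ∧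
      ∀ i, (∑ g, v i g) / n ≤ ubundle v z i i) :
    ∃ X : Finset (Fin p), ∑ o ∈ X, a o = T := by
  classical
  obtain ⟨z, hz, hint, hpr⟩ := hprop
  obtain ⟨σ, rfl⟩ := hz.exists_owner hint
  rcases T.eq_zero_or_pos with rfl | hT
  · exact ⟨∅, sum_empty⟩
  have hnm : ((n - 2 : ℕ) : ℝ) + 2 = n := by rw [Nat.cast_sub hn]; push_cast; ring
  have hshare : ∀ i, ∑ g, v i g = n * T →
      (T : ℝ) ≤ ∑ g ∈ univ.filter (σ · = i), v i g := fun i hi => by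
    simpa [hi, ← ubundle_owner, show (n : ℝ) ≠ 0 by norm_cast; omega] using hpr i
  -- a personal agent without its personal good gets at most 1/2 < T
  have hown : ∀ k, σ (Sum.inr k) = Sum.inr k := by
    intro k
    by_contra hk
    have hlow := hshare (Sum.inr k) (by rw [sum_eq_of_eq_ite (hvP k), hesum]; ring)
    have hup := sum_le_of_eq_ite_of_not_mem (hvP k) (fun g => (he k g).le)
      (S := univ.filter (σ · = Sum.inr k)) (by simpa using hk)
    have : (1 : ℝ) ≤ T := by exact_mod_cast hT
    linarith [hesum k]
  have hbundle : ∀ j : Fin 2, ∑ g ∈ univ.filter (σ · = Sum.inl j), v (Sum.inl j) g =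
      ∑ o ∈ univ.filter (fun o => σ (Sum.inl o) = Sum.inl j), v (Sum.inl j) (Sum.inl o) :=
    fun j => sum_filter_sum_type_of_not_inr _ _ (by simp [hown])
  have hA := hshare (Sum.inl 0) (by
    rw [sum_number_personal_eq a hasum 0 0 (by simp) _ (by simp [hvA]) (by simp [hvA']), hnm])
  have hB := hshare (Sum.inl 1) (by
    rw [sum_number_personal_eq a hasum b c (by rw [hbsum, hcsum]) _ hvB hvB', hnm])
  rw [hbundle] at hA hB
  simp only [hvA, hvB, sum_add_distrib] at hA hB
  have hXY : Disjoint (univ.filter fun o => σ (Sum.inl o) = Sum.inl 0)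
      (univ.filter fun o => σ (Sum.inl o) = Sum.inl 1) :=
    disjoint_filter.2 fun o _ h0 h1 => by simp [h0] at h1
  have hbY : ∑ o ∈ univ.filter (fun o => σ (Sum.inl o) = Sum.inl 1), b o < 1 :=
    calc _ ≤ ∑ o, b o := sum_le_sum_of_subset_of_nonneg (subset_univ _) fun o _ _ => (hb o).le
      _ < 1 := by rw [hbsum]; norm_num
  exact ⟨_, sum_eq_of_disjoint_of_le a hasum hXY (by exact_mod_cast hA)
    (Nat.le_of_cast_le_add_of_lt_one (by exact_mod_cast hB) hbY)⟩

/-- Backward direction of the Partition reduction for zero sharings: if the constructed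
`n`-agent instance admits a proportional allocation with zero sharings (an integral
allocation giving each agent at least `Vᵢ/n`), then the Partition instance has an
equal-sum split. -/
theorem partition_reduction_backward (n p : ℕ) (hn : 2 ≤ n) (hp : 0 < p) (T : ℕ)
    (a : Fin p → ℕ) (ha : ∀ o, 0 < a o) (hasum : ∑ o, a o = 2 * T)
    (b : Fin p → ℝ) (hb : ∀ o, 0 < b o) (hbsum : ∑ o, b o = 1/2)
    (c : Fin (n - 2) → ℝ) (hc : ∀ k, 0 < c k) (hcsum : ∑ k, c k = 1/2)
    (e : Fin (n - 2) → (Fin p ⊕ Fin (n - 2)) → ℝ) (he : ∀ k g, 0 < e k g)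
    (hesum : ∀ k, ∑ g ∈ univ.erase (Sum.inr k), e k g = 1/2)
    (v : (Fin 2 ⊕ Fin (n - 2)) → (Fin p ⊕ Fin (n - 2)) → ℝ)
    (hvA : ∀ o, v (Sum.inl 0) (Sum.inl o) = a o)
    (hvA' : ∀ k, v (Sum.inl 0) (Sum.inr k) = T)
    (hvB : ∀ o, v (Sum.inl 1) (Sum.inl o) = a o + b o)
    (hvB' : ∀ k, v (Sum.inl 1) (Sum.inr k) = T - c k)
    (hvP : ∀ k g, v (Sum.inr k) g = if g = Sum.inr k then (n : ℝ) * T - 1/2 else e k g)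
    (hprop : ∃ z : (Fin 2 ⊕ Fin (n - 2)) → (Fin p ⊕ Fin (n - 2)) → ℝ,
      isAlloc z ∧ (∀ i g, z i g = 0 ∨ z i g = 1) ∧
      ∀ i, (∑ g, v i g) / n ≤ ubundle v z i i) :
    ∃ X : Finset (Fin p), ∑ o ∈ X, a o = T :=
  partition_reduction_backward_general n p hn T a hasum b hb hbsum c hcsum e he hesum v hvA hvA' hvB
    hvB' hvP hprop
end

section
/- If z is an envy-free integral allocation in the zero-sharings reduction instance and y is a discrete-Pareto-optimal integral allocation that weakly Pareto-dominates z, then y is also envy-free. -/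
/-!
A personal agent values all goods but his own at `1/2` in total, less than the `n T - 1/2` he
gets in `z`, so he keeps his own good in `y`. Alice then needs `a`-value at least `T` and Bob
more than `T - 1` from the number goods, whose total `a`-value is `2 T`; as `a` is integral, no
personal agent holds a number good and Alice's `a`-value is exactly `T`. So `y`, like `z`,
splits the number goods into two halves of equal `a`-value, and in such an allocation the only
possible envy is Bob's towards Alice. It is excluded once Bob's `b`-value is at least half of the
total, which holds in `z` by envy-freeness and persists in `y` because Bob is not worse off.
-/

open Finset

open Sum

section General

variable {A G : Type*} [Fintype G] {v w : A → G → ℝ}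

lemma ubundle_of_eq_single [DecidableEq G] {i j : A} {g₀ : G}
    (h : ∀ g, w j g = if g = g₀ then 1 else 0) : ubundle v w i j = v i g₀ := by
  simp [ubundle, h]

variable [Fintype A]

namespace isAlloc

lemma le_one (hw : isAlloc w) (i : A) (g : G) : w i g ≤ 1 :=
  hw.2 g ▸ single_le_sum (fun j _ => hw.1 j g) (mem_univ i)

lemma eq_zero_of_eq_one (hw : isAlloc w) {i j : A} {g : G} (h : w i g = 1) (hj : j ≠ i) :
    w j g = 0 := by
  classical
  have hrest : ∑ l ∈ univ.erase i, w l g = 0 := by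
    have hsum := hw.2 g
    rw [← add_sum_erase _ _ (mem_univ i), h] at hsum
    linarith
  exact (sum_eq_zero_iff_of_nonneg fun l _ => hw.1 l g).1 hrest j (mem_erase.2 ⟨hj, mem_univ j⟩)

lemma sum_sum_mul_comp {O : Type*} [Fintype O] (hw : isAlloc w) (f : O → ℝ) (φ : O → G) :
    ∑ i, ∑ o, f o * w i (φ o) = ∑ o, f o := by
  rw [sum_comm]
  simp only [← mul_sum, hw.2, mul_one]

end isAlloc

variable [DecidableEq G]

lemma ubundle_le_sum_erase (hw : isAlloc w) {i j : A} {g₀ : G} (hv : ∀ g ≠ g₀, 0 ≤ v i g)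
    (h0 : w j g₀ = 0) : ubundle v w i j ≤ ∑ g ∈ univ.erase g₀, v i g := by
  rw [ubundle, ← sum_erase_add _ _ (mem_univ g₀), h0, mul_zero, add_zero]
  exact sum_le_sum fun g hg => mul_le_of_le_one_right (hv g (ne_of_mem_erase hg)) (hw.le_one j g)

lemma eq_one_of_sum_erase_lt_ubundle (hw : isAlloc w) {i : A} {g₀ : G}
    (hint : w i g₀ = 0 ∨ w i g₀ = 1) (hv : ∀ g ≠ g₀, 0 ≤ v i g)
    (h : ∑ g ∈ univ.erase g₀, v i g < ubundle v w i i) : w i g₀ = 1 :=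
  hint.resolve_left fun h0 => (ubundle_le_sum_erase hw hv h0).not_gt h

lemma ubundle_le_self_of_eq_single (hw : isAlloc w) {i : A} {g₀ : G}
    (hi : ∀ g, w i g = if g = g₀ then 1 else 0) (hv : ∀ g ≠ g₀, 0 ≤ v i g)
    (hs : ∑ g ∈ univ.erase g₀, v i g ≤ v i g₀) (j : A) :
    ubundle v w i j ≤ ubundle v w i i := by
  rw [ubundle_of_eq_single hi]
  rcases eq_or_ne j i with rfl | hj
  · rw [ubundle_of_eq_single hi]
  · exact (ubundle_le_sum_erase hw hv (hw.eq_zero_of_eq_one (by simp [hi]) hj)).trans hs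

end General

lemma sum_natCast_mul_eq_of_le_of_lt {ι : Type*} [Fintype ι] (a : ι → ℕ) {x : ι → ℝ}
    (hx : ∀ o, x o = 0 ∨ x o = 1) {T : ℕ} (hlo : T ≤ ∑ o, (a o : ℝ) * x o)
    (hhi : ∑ o, (a o : ℝ) * x o < T + 1) : ∑ o, (a o : ℝ) * x o = T := by
  classical
  have hnat : ∑ o, (a o : ℝ) * x o = ((∑ o ∈ univ.filter (x · = 1), a o : ℕ) : ℝ) := by
    rw [Nat.cast_sum, sum_filter]
    refine sum_congr rfl fun o _ => ?_
    rcases hx o with h | h <;> simp [h]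
  rw [hnat] at hlo hhi ⊢
  exact_mod_cast le_antisymm (Nat.lt_add_one_iff.1 (by exact_mod_cast hhi)) (by exact_mod_cast hlo)

section ZeroSharings

variable {K O : Type*} [Fintype O] {w : Fin 2 ⊕ K → O ⊕ K → ℝ}

def numberValue (f : O → ℝ) (w : Fin 2 ⊕ K → O ⊕ K → ℝ) (i : Fin 2 ⊕ K) : ℝ :=
  ∑ o, f o * w i (inl o)

lemma numberValue_add (f g : O → ℝ) (i : Fin 2 ⊕ K) :
    numberValue (fun o => f o + g o) w i = numberValue f w i + numberValue g w i := by
  simp only [numberValue, add_mul, sum_add_distrib]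

/-- An allocation coming, as `z` does, from an equal-sum partition of the number goods. -/
def IsEqualSumAllocation [DecidableEq K] [DecidableEq O] (a : O → ℕ) (T : ℕ)
    (w : Fin 2 ⊕ K → O ⊕ K → ℝ) : Prop :=
  (∀ k g, w (inr k) g = if g = inr k then 1 else 0) ∧
    numberValue (fun o => (a o : ℝ)) w (inl 0) = T

lemma IsEqualSumAllocation.numberValue_inr [DecidableEq K] [DecidableEq O] {a : O → ℕ} {T : ℕ}
    (hs : IsEqualSumAllocation a T w) (f : O → ℝ) (k : K) : numberValue f w (inr k) = 0 := by
  simp [numberValue, hs.1]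

variable [Fintype K]

lemma numberValue_nonneg (hw : isAlloc w) {f : O → ℝ} (hf : ∀ o, 0 ≤ f o)
    (i : Fin 2 ⊕ K) : 0 ≤ numberValue f w i :=
  sum_nonneg fun o _ => mul_nonneg (hf o) (hw.1 i (inl o))

lemma numberValue_le_sum (hw : isAlloc w) {f : O → ℝ} (hf : ∀ o, 0 ≤ f o)
    (i : Fin 2 ⊕ K) : numberValue f w i ≤ ∑ o, f o :=
  sum_le_sum fun o _ => mul_le_of_le_one_right (hf o) (hw.le_one i (inl o))

lemma isAlloc.numberValue_add_add_sum (hw : isAlloc w) (f : O → ℝ) :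
    numberValue f w (inl 0) + numberValue f w (inl 1) + ∑ k, numberValue f w (inr k)
      = ∑ o, f o := by
  rw [← hw.sum_sum_mul_comp f inl]
  simp [numberValue, Fintype.sum_sum_type, Fin.sum_univ_two]

lemma isAlloc.inl_inr_eq_zero (hw : isAlloc w) (hown : ∀ k, w (inr k) (inr k) = 1) (f : Fin 2)
    (k : K) : w (inl f) (inr k) = 0 :=
  hw.eq_zero_of_eq_one (hown k) inl_ne_inr

variable {v : Fin 2 ⊕ K → O ⊕ K → ℝ} {a : O → ℕ} {b : O → ℝ} {j : Fin 2 ⊕ K}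

lemma ubundle_eq_numberValue (i : Fin 2 ⊕ K) (hj : ∀ k, w j (inr k) = 0) :
    ubundle v w i j = numberValue (fun o => v i (inl o)) w j := by
  simp [ubundle, numberValue, Fintype.sum_sum_type, hj]

lemma ubundle_alice_eq (hvA : ∀ o, v (inl 0) (inl o) = a o) (hj : ∀ k, w j (inr k) = 0) :
    ubundle v w (inl 0) j = numberValue (fun o => (a o : ℝ)) w j := by
  simp only [ubundle_eq_numberValue _ hj, hvA]

lemma ubundle_bob_eq (hvB : ∀ o, v (inl 1) (inl o) = a o + b o) (hj : ∀ k, w j (inr k) = 0) :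
    ubundle v w (inl 1) j = numberValue (fun o => (a o : ℝ)) w j + numberValue b w j := by
  simp only [ubundle_eq_numberValue _ hj, hvB, numberValue_add]

lemma inr_inl_eq_zero_of_lt (hw : isAlloc w) (hint : ∀ i g, w i g = 0 ∨ w i g = 1)
    (ha : ∀ o, 0 < a o)
    (h : ∑ o, (a o : ℝ) < numberValue (fun o => (a o : ℝ)) w (inl 0) +
      numberValue (fun o => (a o : ℝ)) w (inl 1) + 1)
    (k : K) (o : O) : w (inr k) (inl o) = 0 := by
  refine (hint _ _).resolve_right fun h1 => ?_
  have ha_nonneg : ∀ o, (0 : ℝ) ≤ a o := fun o => Nat.cast_nonneg _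
  have hle : (a o : ℝ) ≤ ∑ k, numberValue (fun o => (a o : ℝ)) w (inr k) :=
    calc (a o : ℝ) = a o * w (inr k) (inl o) := by rw [h1, mul_one]
      _ ≤ numberValue (fun o => (a o : ℝ)) w (inr k) :=
        single_le_sum (f := fun o => (a o : ℝ) * w (inr k) (inl o))
          (fun o _ => mul_nonneg (ha_nonneg o) (hw.1 _ _)) (mem_univ o)
      _ ≤ _ := single_le_sum (fun k _ => numberValue_nonneg hw ha_nonneg (inr k)) (mem_univ k)
  have hone : (1 : ℝ) ≤ a o := by exact_mod_cast ha o
  linarith [hw.numberValue_add_add_sum fun o => (a o : ℝ)]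

variable [DecidableEq K] [DecidableEq O]

lemma isEqualSumAllocation_of_le (hw : isAlloc w) (hint : ∀ i g, w i g = 0 ∨ w i g = 1)
    (ha : ∀ o, 0 < a o) {T : ℕ} (hasum : ∑ o, a o = 2 * T)
    (hown : ∀ k, w (inr k) (inr k) = 1)
    (hA : T ≤ numberValue (fun o => (a o : ℝ)) w (inl 0))
    (hB : (T : ℝ) - 1 < numberValue (fun o => (a o : ℝ)) w (inl 1)) :
    IsEqualSumAllocation a T w := by
  have hsum : ∑ o, (a o : ℝ) = 2 * T := by exact_mod_cast hasum
  have hnum := inr_inl_eq_zero_of_lt hw hint ha (by linarith)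
  refine ⟨fun k g => ?_, ?_⟩
  · rcases g with o | l
    · simp [hnum]
    · rcases eq_or_ne l k with rfl | hlk
      · simp [hown]
      · simp [hlk, hw.eq_zero_of_eq_one (hown l) (inr_injective.ne hlk.symm)]
  · have hsplit := hw.numberValue_add_add_sum fun o => (a o : ℝ)
    simp only [numberValue, hnum, mul_zero, sum_const_zero, add_zero] at hsplit
    unfold numberValue at hB
    exact sum_natCast_mul_eq_of_le_of_lt a (fun o => hint _ _) hA (by linarith)

namespace IsEqualSumAllocation

variable {T : ℕ}

lemma inl_inr_eq_zero (hw : isAlloc w) (hs : IsEqualSumAllocation a T w) (f : Fin 2) (k : K) :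
    w (inl f) (inr k) = 0 :=
  hw.inl_inr_eq_zero (fun k => by simp [hs.1]) f k

lemma numberValue_alice_add_bob (hw : isAlloc w) (hs : IsEqualSumAllocation a T w) (f : O → ℝ) :
    numberValue f w (inl 0) + numberValue f w (inl 1) = ∑ o, f o := by
  simpa [hs.numberValue_inr] using hw.numberValue_add_add_sum f

lemma numberValue_eq (hw : isAlloc w) (hs : IsEqualSumAllocation a T w)
    (hasum : ∑ o, a o = 2 * T) (f : Fin 2) :
    numberValue (fun o => (a o : ℝ)) w (inl f) = T := by
  have hsplit := hs.numberValue_alice_add_bob hw fun o => (a o : ℝ)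
  rw [← Nat.cast_sum, hasum, hs.2] at hsplit
  fin_cases f
  · exact hs.2
  · push_cast at hsplit ⊢
    linarith

lemma ubundle_alice (hw : isAlloc w) (hs : IsEqualSumAllocation a T w)
    (hasum : ∑ o, a o = 2 * T) (hvA : ∀ o, v (inl 0) (inl o) = a o) (f : Fin 2) :
    ubundle v w (inl 0) (inl f) = T := by
  rw [ubundle_alice_eq hvA (hs.inl_inr_eq_zero hw f), hs.numberValue_eq hw hasum]

lemma ubundle_bob (hw : isAlloc w) (hs : IsEqualSumAllocation a T w)
    (hasum : ∑ o, a o = 2 * T) (hvB : ∀ o, v (inl 1) (inl o) = a o + b o) (f : Fin 2) :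
    ubundle v w (inl 1) (inl f) = T + numberValue b w (inl f) := by
  rw [ubundle_bob_eq hvB (hs.inl_inr_eq_zero hw f), hs.numberValue_eq hw hasum]

lemma ubundle_bob_alice_le_iff (hw : isAlloc w) (hs : IsEqualSumAllocation a T w)
    (hasum : ∑ o, a o = 2 * T) (hvB : ∀ o, v (inl 1) (inl o) = a o + b o) :
    ubundle v w (inl 1) (inl 0) ≤ ubundle v w (inl 1) (inl 1) ↔
      (∑ o, b o) / 2 ≤ numberValue b w (inl 1) := by
  rw [hs.ubundle_bob hw hasum hvB, hs.ubundle_bob hw hasum hvB,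
    ← hs.numberValue_alice_add_bob hw b]
  constructor <;> intro h <;> linarith

lemma alice_envyFree (hw : isAlloc w) (hs : IsEqualSumAllocation a T w)
    (hasum : ∑ o, a o = 2 * T) (hvA : ∀ o, v (inl 0) (inl o) = a o)
    (hvA' : ∀ k, v (inl 0) (inr k) = T) (j : Fin 2 ⊕ K) :
    ubundle v w (inl 0) j ≤ ubundle v w (inl 0) (inl 0) := by
  rw [hs.ubundle_alice hw hasum hvA]
  rcases j with f | k
  · rw [hs.ubundle_alice hw hasum hvA]
  · rw [ubundle_of_eq_single (hs.1 k), hvA']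

lemma bob_envyFree (hw : isAlloc w) (hs : IsEqualSumAllocation a T w)
    (hasum : ∑ o, a o = 2 * T) (hb : ∀ o, 0 ≤ b o)
    (hvB : ∀ o, v (inl 1) (inl o) = a o + b o)
    {c : K → ℝ} (hc : ∀ k, 0 ≤ c k) (hvB' : ∀ k, v (inl 1) (inr k) = T - c k)
    (hhalf : (∑ o, b o) / 2 ≤ numberValue b w (inl 1)) (j : Fin 2 ⊕ K) :
    ubundle v w (inl 1) j ≤ ubundle v w (inl 1) (inl 1) := by
  rcases j with f | k
  · fin_cases f
    · exact (hs.ubundle_bob_alice_le_iff hw hasum hvB).2 hhalf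
    · exact le_rfl
  · rw [ubundle_of_eq_single (hs.1 k), hvB', hs.ubundle_bob hw hasum hvB]
    linarith [hc k, numberValue_nonneg hw hb (inl 1)]

end IsEqualSumAllocation

end ZeroSharings

section PersonalAgents

variable {K O : Type*} [DecidableEq K] [DecidableEq O] {v : Fin 2 ⊕ K → O ⊕ K → ℝ}
  {e : K → O ⊕ K → ℝ} {M : ℝ}

lemma personal_value_nonneg
    (hvP : ∀ k g, v (inr k) g = if g = inr k then M - 1/2 else e k g) (he : ∀ k g, 0 ≤ e k g)
    (k : K) : ∀ g ≠ inr k, 0 ≤ v (inr k) g := fun g hg => by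
  rw [hvP, if_neg hg]
  exact he k g

lemma personal_sum_erase_value [Fintype K] [Fintype O]
    (hvP : ∀ k g, v (inr k) g = if g = inr k then M - 1/2 else e k g)
    (hesum : ∀ k, ∑ g ∈ univ.erase (inr k), e k g = 1/2) (k : K) :
    ∑ g ∈ univ.erase (inr k), v (inr k) g = 1/2 := by
  rw [← hesum k]
  exact sum_congr rfl fun g hg => by rw [hvP, if_neg (ne_of_mem_erase hg)]

end PersonalAgents

theorem dpo_dominating_is_envy_free_general (n p : ℕ) (hn : 2 ≤ n) (hp : 0 < p) (T : ℕ)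
    (a : Fin p → ℕ) (ha : ∀ o, 0 < a o) (hasum : ∑ o, a o = 2 * T)
    (b : Fin p → ℝ) (hb : ∀ o, 0 < b o) (hbsum : ∑ o, b o = 1/2)
    (c : Fin (n - 2) → ℝ) (hc : ∀ k, 0 < c k)
    (e : Fin (n - 2) → (Fin p ⊕ Fin (n - 2)) → ℝ) (he : ∀ k g, 0 < e k g)
    (hesum : ∀ k, ∑ g ∈ univ.erase (Sum.inr k), e k g = 1/2)
    (v : (Fin 2 ⊕ Fin (n - 2)) → (Fin p ⊕ Fin (n - 2)) → ℝ)
    (hvA : ∀ o, v (Sum.inl 0) (Sum.inl o) = a o)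
    (hvA' : ∀ k, v (Sum.inl 0) (Sum.inr k) = T)
    (hvB : ∀ o, v (Sum.inl 1) (Sum.inl o) = a o + b o)
    (hvB' : ∀ k, v (Sum.inl 1) (Sum.inr k) = T - c k)
    (hvP : ∀ k g, v (Sum.inr k) g = if g = Sum.inr k then (n : ℝ) * T - 1/2 else e k g)
    -- `z`: the envy-free integral allocation from an equal-sum partition
    (z : (Fin 2 ⊕ Fin (n - 2)) → (Fin p ⊕ Fin (n - 2)) → ℝ)
    (hz : isAlloc z)
    (hzEF : ∀ i j, ubundle v z i j ≤ ubundle v z i i)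
    (hzpers : ∀ k g, z (Sum.inr k) g = if g = Sum.inr k then 1 else 0)
    (hzA : ubundle v z (Sum.inl 0) (Sum.inl 0) = T)
    -- `y`: an integral dPO allocation weakly Pareto-dominating `z`
    (y : (Fin 2 ⊕ Fin (n - 2)) → (Fin p ⊕ Fin (n - 2)) → ℝ)
    (hy : isAlloc y) (hyint : ∀ i g, y i g = 0 ∨ y i g = 1)
    (hdom : ∀ i, ubundle v z i i ≤ ubundle v y i i) :
    ∀ i j, ubundle v y i j ≤ ubundle v y i i := by
  have hT : 1 ≤ T := by
    have := sum_pos (fun o _ => ha o) ⟨⟨0, hp⟩, mem_univ _⟩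
    omega
  have hM : (1 : ℝ) < n * T := by exact_mod_cast (by nlinarith : 1 < n * T)
  have hv_nonneg := personal_value_nonneg hvP fun k g => (he k g).le
  have hv_sum := personal_sum_erase_value hvP hesum
  have hzs : IsEqualSumAllocation a T z := by
    refine ⟨hzpers, ?_⟩
    rw [← hzA, ubundle_alice_eq hvA (hz.inl_inr_eq_zero (fun k => by simp [hzpers]) 0)]
  have hzB := (hzs.ubundle_bob_alice_le_iff hz hasum hvB).1 (hzEF _ _)
  have hown : ∀ k, y (inr k) (inr k) = 1 := fun k =>
    eq_one_of_sum_erase_lt_ubundle hy (hyint _ _) (hv_nonneg k) <| by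
      refine lt_of_lt_of_le ?_ (hdom (inr k))
      rw [hv_sum, ubundle_of_eq_single (hzpers k), hvP, if_pos rfl]
      linarith
  have hyAB := hy.inl_inr_eq_zero hown
  have hdomA := hdom (inl 0)
  have hdomB := hdom (inl 1)
  rw [hzs.ubundle_alice hz hasum hvA, ubundle_alice_eq hvA (hyAB 0)] at hdomA
  rw [hzs.ubundle_bob hz hasum hvB, ubundle_bob_eq hvB (hyAB 1)] at hdomB
  have hys : IsEqualSumAllocation a T y := isEqualSumAllocation_of_le hy hyint ha hasum hown hdomA
    (by linarith [numberValue_le_sum hy (fun o => (hb o).le) (inl 1),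
      numberValue_nonneg hz (fun o => (hb o).le) (inl 1)])
  rintro (f | k) j
  · fin_cases f
    · exact hys.alice_envyFree hy hasum hvA hvA' j
    · refine hys.bob_envyFree hy hasum (fun o => (hb o).le) hvB (fun k => (hc k).le) hvB' ?_ j
      linarith [hys.numberValue_eq hy hasum 1]
  · exact ubundle_le_self_of_eq_single hy (hys.1 k) (hv_nonneg k)
      (by rw [hv_sum, hvP, if_pos rfl]; linarith) j

/-- In the zero-sharings reduction instance, if `z` is the envy-free integral allocation
coming from an equal-sum partition (each personal agent gets exactly his personal good,
Alice's utility is exactly `T`), and `y` is a discrete-Pareto-optimal integral allocation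
weakly Pareto-dominating `z`, then `y` is envy-free as well. -/
theorem dpo_dominating_is_envy_free (n p : ℕ) (hn : 2 ≤ n) (hp : 0 < p) (T : ℕ)
    (a : Fin p → ℕ) (ha : ∀ o, 0 < a o) (hasum : ∑ o, a o = 2 * T)
    (b : Fin p → ℝ) (hb : ∀ o, 0 < b o) (hbsum : ∑ o, b o = 1/2)
    (c : Fin (n - 2) → ℝ) (hc : ∀ k, 0 < c k) (hcsum : ∑ k, c k = 1/2)
    (e : Fin (n - 2) → (Fin p ⊕ Fin (n - 2)) → ℝ) (he : ∀ k g, 0 < e k g)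
    (hesum : ∀ k, ∑ g ∈ univ.erase (Sum.inr k), e k g = 1/2)
    (v : (Fin 2 ⊕ Fin (n - 2)) → (Fin p ⊕ Fin (n - 2)) → ℝ)
    (hvA : ∀ o, v (Sum.inl 0) (Sum.inl o) = a o)
    (hvA' : ∀ k, v (Sum.inl 0) (Sum.inr k) = T)
    (hvB : ∀ o, v (Sum.inl 1) (Sum.inl o) = a o + b o)
    (hvB' : ∀ k, v (Sum.inl 1) (Sum.inr k) = T - c k)
    (hvP : ∀ k g, v (Sum.inr k) g = if g = Sum.inr k then (n : ℝ) * T - 1/2 else e k g)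
    -- `z`: the envy-free integral allocation from an equal-sum partition
    (z : (Fin 2 ⊕ Fin (n - 2)) → (Fin p ⊕ Fin (n - 2)) → ℝ)
    (hz : isAlloc z) (hzint : ∀ i g, z i g = 0 ∨ z i g = 1)
    (hzEF : ∀ i j, ubundle v z i j ≤ ubundle v z i i)
    (hzpers : ∀ k g, z (Sum.inr k) g = if g = Sum.inr k then 1 else 0)
    (hzA : ubundle v z (Sum.inl 0) (Sum.inl 0) = T)
    -- `y`: an integral dPO allocation weakly Pareto-dominating `z`
    (y : (Fin 2 ⊕ Fin (n - 2)) → (Fin p ⊕ Fin (n - 2)) → ℝ)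
    (hy : isAlloc y) (hyint : ∀ i g, y i g = 0 ∨ y i g = 1)
    (hdom : ∀ i, ubundle v z i i ≤ ubundle v y i i)
    (hdPO : ¬ ∃ y' : (Fin 2 ⊕ Fin (n - 2)) → (Fin p ⊕ Fin (n - 2)) → ℝ,
      isAlloc y' ∧ (∀ i g, y' i g = 0 ∨ y' i g = 1) ∧
      (∀ i, ubundle v y i i ≤ ubundle v y' i i) ∧
      ∃ i, ubundle v y i i < ubundle v y' i i) :
    ∀ i j, ubundle v y i j ≤ ubundle v y i i :=
  dpo_dominating_is_envy_free_general n p hn hp T a ha hasum b hb hbsum c hc e he hesum v hvA hvA'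
    hvB hvB' hvP z hz hzEF hzpers hzA y hy hyint hdom
end
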